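/- (Lemma 2, algebraic form.) Let β > 0. If −(n/(n−1)) β (‖X‖²‖Y‖² − ⟨X,Y⟩²) < R(X,Y,X,Y) ≤ −β(‖X‖²‖Y‖² − ⟨X,Y⟩²) for all linearly independent X,Y ∈ E, then Q̊(φ) < 0 for every nonzero traceless symmetric bilinear form φ on E. If instead −(n/(n−1)) β (‖X‖²‖Y‖² − ⟨X,Y⟩²) ≤ R(X,Y,X,Y) ≤ −β(‖X‖²‖Y‖² − ⟨X,Y⟩²) for all X,Y ∈ E, then Q̊(φ) ≤ 0 for every traceless symmetric bilinear form φ on E. -/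

import Mathlib

open scoped RealInnerProductSpace

/-!
Since `Q̊(φ)` and `‖φ‖²` are full contractions, they do not depend on the orthonormal basis, so
we may compute in an orthonormal eigenbasis `(f_k)` of `φ`, with eigenvalues `μ_k` summing to
zero. There `Q̊(φ) = ∑_{i ≠ k} A_{ik} μ_i μ_k`, where `A_{ik} = -R(f_i, f_k, f_i, f_k)` lies in
`[β, nβ/(n-1)]`. Writing `A_{ik} = nβ/(n-1) - c_{ik}` with `0 ≤ c_{ik} ≤ β/(n-1)`, the constant part
contributes `-nβ/(n-1) ∑ μ_k²` because `∑ μ_k = 0`, and the rest is at most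
`β/(n-1) ((∑ |μ_k|)² - ∑ μ_k²) ≤ β ∑ μ_k²` by Cauchy–Schwarz. Hence
`Q̊(φ) ≤ -(β/(n-1)) ‖φ‖²`.
-/

section

variable {ι κ E : Type*} [Fintype ι] [Fintype κ] [NormedAddCommGroup E] [InnerProductSpace ℝ E]

namespace OrthonormalBasis

noncomputable def curvatureTerm (e : OrthonormalBasis ι ℝ E) (R : E →ₗ[ℝ] E →ₗ[ℝ] E →ₗ[ℝ] E →ₗ[ℝ] ℝ)
    (φ : E →ₗ[ℝ] E →ₗ[ℝ] ℝ) : ℝ :=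
  ∑ i, ∑ j, ∑ k, ∑ l, R (e i) (e k) (e l) (e j) * φ (e k) (e l) * φ (e i) (e j)

theorem sum_inner_mul_apply (b : OrthonormalBasis ι ℝ E) (F : E →ₗ[ℝ] ℝ) (v : E) :
    ∑ i, ⟪b i, v⟫ * F (b i) = F v := by
  conv_rhs => rw [← b.sum_repr' v]
  simp only [map_sum, map_smul, smul_eq_mul]

theorem sum_apply_mul_apply_eq (e : OrthonormalBasis ι ℝ E) (f : OrthonormalBasis κ ℝ E)
    (F G : E →ₗ[ℝ] ℝ) : ∑ i, F (e i) * G (e i) = ∑ k, F (f k) * G (f k) := by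
  calc ∑ i, F (e i) * G (e i) = ∑ i, ∑ k, ⟪e i, f k⟫ * F (e i) * G (f k) := by
        simp only [← f.sum_inner_mul_apply G (e _), Finset.mul_sum, real_inner_comm, mul_assoc,
          mul_left_comm (F _)]
    _ = ∑ k, F (f k) * G (f k) := by
        rw [Finset.sum_comm]
        simp only [← Finset.sum_mul, e.sum_inner_mul_apply]

theorem sum_sum_apply_mul_apply_eq (e : OrthonormalBasis ι ℝ E) (f : OrthonormalBasis κ ℝ E)
    (A B : E →ₗ[ℝ] E →ₗ[ℝ] ℝ) :
    ∑ i, ∑ j, A (e i) (e j) * B (e i) (e j) = ∑ k, ∑ l, A (f k) (f l) * B (f k) (f l) := by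
  calc ∑ i, ∑ j, A (e i) (e j) * B (e i) (e j) = ∑ i, ∑ l, A (e i) (f l) * B (e i) (f l) := by
        simp only [sum_apply_mul_apply_eq e f (A (e _)) (B (e _))]
    _ = ∑ l, ∑ i, A.flip (f l) (e i) * B.flip (f l) (e i) := Finset.sum_comm
    _ = ∑ l, ∑ k, A.flip (f l) (f k) * B.flip (f l) (f k) := by
        simp only [sum_apply_mul_apply_eq e f (A.flip (f _)) (B.flip (f _))]
    _ = ∑ k, ∑ l, A (f k) (f l) * B (f k) (f l) := Finset.sum_comm

theorem sum_apply_self_eq (e : OrthonormalBasis ι ℝ E) (f : OrthonormalBasis κ ℝ E)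
    (B : E →ₗ[ℝ] E →ₗ[ℝ] ℝ) :
    ∑ i, B (e i) (e i) = ∑ k, B (f k) (f k) := by
  classical
  simpa [innerₛₗ_apply_apply, orthonormal_iff_ite.mp e.orthonormal,
    orthonormal_iff_ite.mp f.orthonormal] using sum_sum_apply_mul_apply_eq e f (innerₗ E) B

theorem curvatureTerm_eq (e : OrthonormalBasis ι ℝ E) (f : OrthonormalBasis κ ℝ E)
    (R : E →ₗ[ℝ] E →ₗ[ℝ] E →ₗ[ℝ] E →ₗ[ℝ] ℝ) (φ : E →ₗ[ℝ] E →ₗ[ℝ] ℝ) :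
    e.curvatureTerm R φ = f.curvatureTerm R φ := by
  let Rφ : E →ₗ[ℝ] E →ₗ[ℝ] ℝ :=
    ∑ k, ∑ l, φ (f k) (f l) • ((R.flip (f k)).flip (f l))
  calc _ = ∑ i, ∑ j, (∑ k, ∑ l, (R (e i)).compr₂ (LinearMap.applyₗ (e j)) (e k) (e l) *
          φ (e k) (e l)) * φ (e i) (e j) := by
        simp only [curvatureTerm, Finset.sum_mul]; rfl
    _ = ∑ i, ∑ j, Rφ (e i) (e j) * φ (e i) (e j) := by
        refine Finset.sum_congr rfl fun i _ => Finset.sum_congr rfl fun j _ => ?_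
        rw [sum_sum_apply_mul_apply_eq e f]
        simp [Rφ, Finset.mul_sum, mul_comm]
    _ = ∑ i, ∑ j, Rφ (f i) (f j) * φ (f i) (f j) := sum_sum_apply_mul_apply_eq e f Rφ φ
    _ = _ := by
        simp [curvatureTerm, Rφ, Finset.mul_sum, mul_comm]

theorem sum_sum_sq_pos (e : OrthonormalBasis ι ℝ E) {φ : E →ₗ[ℝ] E →ₗ[ℝ] ℝ} (hφ : φ ≠ 0) :
    0 < ∑ i, ∑ j, φ (e i) (e j) ^ 2 := by
  refine lt_of_le_of_ne (by positivity) fun hzero => hφ ?_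
  have hsq := (Finset.sum_eq_zero_iff_of_nonneg fun i _ => by positivity).mp hzero.symm
  refine LinearMap.ext_basis e.toBasis e.toBasis fun i j => ?_
  simpa using (Finset.sum_eq_zero_iff_of_nonneg fun j _ => sq_nonneg _).mp
    (hsq i (Finset.mem_univ i)) j (Finset.mem_univ j)

end OrthonormalBasis

theorem LinearMap.exists_orthonormalBasis_apply_eq_ite [FiniteDimensional ℝ E] {n : ℕ}
    (hn : Module.finrank ℝ E = n) (φ : E →ₗ[ℝ] E →ₗ[ℝ] ℝ) (hφ : ∀ x y, φ x y = φ y x) :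
    ∃ (f : OrthonormalBasis (Fin n) ℝ E) (μ : Fin n → ℝ),
      ∀ k l, φ (f k) (f l) = if k = l then μ k else 0 := by
  let T : E →ₗ[ℝ] E :=
    { toFun x := (InnerProductSpace.toDual ℝ E).symm (φ x).toContinuousLinearMap
      map_add' x y := by simp
      map_smul' c x := by simp }
  have hT : ∀ x y, ⟪T x, y⟫ = φ x y := fun x y => by
    simp [T, InnerProductSpace.toDual_symm_apply]
  have hTsymm : T.IsSymmetric := fun x y => by
    rw [hT, hφ, ← hT, real_inner_comm]
  refine ⟨hTsymm.eigenvectorBasis hn, hTsymm.eigenvalues hn, fun k l => ?_⟩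
  rw [← hT, hTsymm.apply_eigenvectorBasis, real_inner_smul_left,
    orthonormal_iff_ite.mp (hTsymm.eigenvectorBasis hn).orthonormal]
  simp

theorem sum_sum_mul_mul_le_of_sum_eq_zero {a b : ℝ} (hab : a ≤ b) (A : ι → ι → ℝ)
    (hdiag : ∀ i, A i i = 0) (hA : ∀ i k, i ≠ k → a ≤ A i k ∧ A i k ≤ b)
    (μ : ι → ℝ) (hμ : ∑ i, μ i = 0) :
    ∑ i, ∑ k, A i k * μ k * μ i ≤ (((Fintype.card ι : ℝ) - 1) * (b - a) - b) * ∑ i, μ i ^ 2 := by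
  classical
  have hterm : ∀ i k, A i k * μ k * μ i ≤
      b * (μ k * μ i) + (b - a) * (|μ k| * |μ i|) - if i = k then (2 * b - a) * μ i ^ 2 else 0 := by
    intro i k
    by_cases hik : i = k
    · subst hik
      simp only [hdiag, abs_mul_abs_self, if_true]
      exact le_of_eq (by ring)
    · obtain ⟨haA, hAb⟩ := hA i k hik
      have habs : -(μ k * μ i) ≤ |μ k| * |μ i| := abs_mul (μ k) (μ i) ▸ neg_le_abs _
      simp only [hik, if_false, sub_zero]
      nlinarith [mul_le_mul_of_nonneg_left habs (sub_nonneg.2 hAb),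
        mul_nonneg (sub_nonneg.2 haA) (mul_nonneg (abs_nonneg (μ k)) (abs_nonneg (μ i)))]
  have hcauchy : (∑ i, |μ i|) ^ 2 ≤ Fintype.card ι * ∑ i, μ i ^ 2 := by
    simpa using sq_sum_le_card_mul_sum_sq (s := Finset.univ) (f := fun i => |μ i|)
  calc ∑ i, ∑ k, A i k * μ k * μ i
      ≤ ∑ i, ∑ k, (b * (μ k * μ i) + (b - a) * (|μ k| * |μ i|) -
          if i = k then (2 * b - a) * μ i ^ 2 else 0) :=
        Finset.sum_le_sum fun i _ => Finset.sum_le_sum fun k _ => hterm i k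
    _ = b * (∑ i, μ i) ^ 2 + (b - a) * (∑ i, |μ i|) ^ 2 - (2 * b - a) * ∑ i, μ i ^ 2 := by
        simp only [Finset.sum_sub_distrib, Finset.sum_add_distrib, Finset.sum_ite_eq,
          Finset.mem_univ, if_true, ← Finset.mul_sum, ← Finset.sum_mul, sq]
    _ ≤ _ := by
        rw [hμ]
        nlinarith [mul_le_mul_of_nonneg_left hcauchy (sub_nonneg.2 hab)]

theorem Orthonormal.norm_sq_mul_norm_sq_sub_inner_sq {X Y : E} (h : Orthonormal ℝ ![X, Y]) :
    ‖X‖ ^ 2 * ‖Y‖ ^ 2 - ⟪X, Y⟫ ^ 2 = 1 := by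
  have hX : ‖X‖ = 1 := by simpa using h.1 0
  have hY : ‖Y‖ = 1 := by simpa using h.1 1
  have hXY : ⟪X, Y⟫ = 0 := by simpa using h.2 (show (0 : Fin 2) ≠ 1 by decide)
  simp [hX, hY, hXY]

theorem OrthonormalBasis.curvatureTerm_le {n : ℕ} (hn : 2 ≤ n) (e : OrthonormalBasis (Fin n) ℝ E)
    (R : E →ₗ[ℝ] E →ₗ[ℝ] E →ₗ[ℝ] E →ₗ[ℝ] ℝ)
    (hR1 : ∀ X Y Z W : E, R X Y Z W = - R Y X Z W)
    (hR2 : ∀ X Y Z W : E, R X Y Z W = - R X Y W Z) {β : ℝ} (hβ : 0 ≤ β)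
    (hK : ∀ X Y : E, Orthonormal ℝ ![X, Y] →
      -((n : ℝ) / ((n : ℝ) - 1)) * β ≤ R X Y X Y ∧ R X Y X Y ≤ -β)
    (φ : E →ₗ[ℝ] E →ₗ[ℝ] ℝ) (hφ : ∀ X Y : E, φ X Y = φ Y X) (htr : ∑ i, φ (e i) (e i) = 0) :
    e.curvatureTerm R φ ≤ -(β / ((n : ℝ) - 1)) * ∑ i, ∑ j, φ (e i) (e j) ^ 2 := by
  have : FiniteDimensional ℝ E := e.toBasis.finiteDimensional_of_finite
  obtain ⟨f, μ, hf⟩ := φ.exists_orthonormalBasis_apply_eq_ite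
    (by simpa using Module.finrank_eq_card_basis e.toBasis) hφ
  have hQ : e.curvatureTerm R φ = ∑ i, ∑ k, R (f i) (f k) (f k) (f i) * μ k * μ i := by
    rw [e.curvatureTerm_eq f]
    simp [curvatureTerm, hf, Finset.sum_ite_eq]
  have hnorm : ∑ i, ∑ j, φ (e i) (e j) ^ 2 = ∑ k, μ k ^ 2 := by
    simp only [sq]
    rw [e.sum_sum_apply_mul_apply_eq f]
    simp [hf]
  have htrace : ∑ k, μ k = 0 := by
    rw [← htr, e.sum_apply_self_eq f]
    simp [hf]
  have hn' : (2 : ℝ) ≤ n := by exact_mod_cast hn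
  have hn1 : (n : ℝ) - 1 ≠ 0 := by linarith
  have hA : ∀ i k, i ≠ k → β ≤ R (f i) (f k) (f k) (f i) ∧
      R (f i) (f k) (f k) (f i) ≤ (n : ℝ) / ((n : ℝ) - 1) * β := by
    intro i k hik
    have hfik : Orthonormal ℝ ![f i, f k] := by
      convert f.orthonormal.comp ![i, k] (by simpa using hik) using 1
      ext j
      fin_cases j <;> rfl
    obtain ⟨h1, h2⟩ := hK _ _ hfik
    rw [hR2 (f i) (f k) (f k) (f i)]
    constructor <;> linarith
  have hab : β ≤ (n : ℝ) / ((n : ℝ) - 1) * β :=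
    le_mul_of_one_le_left hβ ((one_le_div (by linarith)).2 (by linarith))
  have hdiag : ∀ i, R (f i) (f i) (f i) (f i) = 0 := fun i => by
    linarith [hR1 (f i) (f i) (f i) (f i)]
  rw [hQ, hnorm]
  convert sum_sum_mul_mul_le_of_sum_eq_zero hab _ hdiag hA μ htrace using 2
  rw [Fintype.card_fin]
  field_simp
  ring

end

theorem stmt_10_general
    {E : Type*} [NormedAddCommGroup E] [InnerProductSpace ℝ E]
    {n : ℕ} (hn : 2 ≤ n) (e : OrthonormalBasis (Fin n) ℝ E)
    (R : E →ₗ[ℝ] E →ₗ[ℝ] E →ₗ[ℝ] E →ₗ[ℝ] ℝ)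
    (hR1 : ∀ X Y Z W : E, R X Y Z W = - R Y X Z W)
    (hR2 : ∀ X Y Z W : E, R X Y Z W = - R X Y W Z)
    (β : ℝ) (hβ : 0 < β) :
    ((∀ X Y : E, LinearIndependent ℝ ![X, Y] →
        -((n : ℝ) / ((n : ℝ) - 1)) * β * (‖X‖ ^ 2 * ‖Y‖ ^ 2 - ⟪X, Y⟫ ^ 2) < R X Y X Y ∧
        R X Y X Y ≤ -β * (‖X‖ ^ 2 * ‖Y‖ ^ 2 - ⟪X, Y⟫ ^ 2)) →
      ∀ φ : E →ₗ[ℝ] E →ₗ[ℝ] ℝ, (∀ X Y : E, φ X Y = φ Y X) →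
        (∑ i, φ (e i) (e i)) = 0 → φ ≠ 0 →
        (∑ i, ∑ j, ∑ k, ∑ l, R (e i) (e k) (e l) (e j) * φ (e k) (e l) * φ (e i) (e j)) < 0) ∧
    ((∀ X Y : E,
        -((n : ℝ) / ((n : ℝ) - 1)) * β * (‖X‖ ^ 2 * ‖Y‖ ^ 2 - ⟪X, Y⟫ ^ 2) ≤ R X Y X Y ∧
        R X Y X Y ≤ -β * (‖X‖ ^ 2 * ‖Y‖ ^ 2 - ⟪X, Y⟫ ^ 2)) →
      ∀ φ : E →ₗ[ℝ] E →ₗ[ℝ] ℝ, (∀ X Y : E, φ X Y = φ Y X) →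
        (∑ i, φ (e i) (e i)) = 0 →
        (∑ i, ∑ j, ∑ k, ∑ l, R (e i) (e k) (e l) (e j) * φ (e k) (e l) * φ (e i) (e j)) ≤ 0) := by
  have hc : 0 < β / ((n : ℝ) - 1) :=
    div_pos hβ (by linarith [show (2 : ℝ) ≤ n by exact_mod_cast hn])
  have hbound : ∀ φ : E →ₗ[ℝ] E →ₗ[ℝ] ℝ, (∀ X Y : E, φ X Y = φ Y X) → ∑ i, φ (e i) (e i) = 0 →
      (∀ X Y : E, Orthonormal ℝ ![X, Y] →
        -((n : ℝ) / ((n : ℝ) - 1)) * β * (‖X‖ ^ 2 * ‖Y‖ ^ 2 - ⟪X, Y⟫ ^ 2) ≤ R X Y X Y ∧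
        R X Y X Y ≤ -β * (‖X‖ ^ 2 * ‖Y‖ ^ 2 - ⟪X, Y⟫ ^ 2)) →
      e.curvatureTerm R φ ≤ -(β / ((n : ℝ) - 1)) * ∑ i, ∑ j, φ (e i) (e j) ^ 2 :=
    fun φ hφ htr hK => e.curvatureTerm_le hn R hR1 hR2 hβ.le
      (fun X Y h => by simpa [h.norm_sq_mul_norm_sq_sub_inner_sq] using hK X Y h) φ hφ htr
  refine ⟨fun hyp φ hφ htr hφ0 => ?_, fun hyp φ hφ htr => ?_⟩
  · calc _ ≤ _ := hbound φ hφ htr fun X Y h => (hyp X Y h.linearIndependent).imp_left le_of_lt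
      _ < 0 := mul_neg_of_neg_of_pos (neg_neg_of_pos hc) (e.sum_sum_sq_pos hφ0)
  · calc _ ≤ _ := hbound φ hφ htr fun X Y _ => hyp X Y
      _ ≤ 0 := mul_nonpos_of_nonpos_of_nonneg (neg_nonpos.2 hc.le) (by positivity)

/-- **Lemma 2, algebraic form.** Let `β > 0`.
If `−(n/(n−1)) β (‖X‖²‖Y‖² − ⟪X,Y⟫²) < R(X,Y,X,Y) ≤ −β(‖X‖²‖Y‖² − ⟪X,Y⟫²)`
for all linearly independent `X, Y`, then `Q̊(φ) < 0` for every nonzero traceless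
symmetric bilinear form `φ`; if instead the non-strict inequalities hold for all `X, Y`,
then `Q̊(φ) ≤ 0` for every traceless symmetric bilinear form `φ`. -/
theorem stmt_10
    {E : Type*} [NormedAddCommGroup E] [InnerProductSpace ℝ E]
    {n : ℕ} (hn : 2 ≤ n) (e : OrthonormalBasis (Fin n) ℝ E)
    (R : E →ₗ[ℝ] E →ₗ[ℝ] E →ₗ[ℝ] E →ₗ[ℝ] ℝ)
    (hR1 : ∀ X Y Z W : E, R X Y Z W = - R Y X Z W)
    (hR2 : ∀ X Y Z W : E, R X Y Z W = - R X Y W Z)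
    (hR3 : ∀ X Y Z W : E, R X Y Z W = R Z W X Y)
    (hR4 : ∀ X Y Z W : E, R X Y Z W + R Y Z X W + R Z X Y W = 0)
    (β : ℝ) (hβ : 0 < β) :
    ((∀ X Y : E, LinearIndependent ℝ ![X, Y] →
        -((n : ℝ) / ((n : ℝ) - 1)) * β * (‖X‖ ^ 2 * ‖Y‖ ^ 2 - ⟪X, Y⟫ ^ 2) < R X Y X Y ∧
        R X Y X Y ≤ -β * (‖X‖ ^ 2 * ‖Y‖ ^ 2 - ⟪X, Y⟫ ^ 2)) →
      ∀ φ : E →ₗ[ℝ] E →ₗ[ℝ] ℝ, (∀ X Y : E, φ X Y = φ Y X) →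
        (∑ i, φ (e i) (e i)) = 0 → φ ≠ 0 →
        (∑ i, ∑ j, ∑ k, ∑ l, R (e i) (e k) (e l) (e j) * φ (e k) (e l) * φ (e i) (e j)) < 0) ∧
    ((∀ X Y : E,
        -((n : ℝ) / ((n : ℝ) - 1)) * β * (‖X‖ ^ 2 * ‖Y‖ ^ 2 - ⟪X, Y⟫ ^ 2) ≤ R X Y X Y ∧
        R X Y X Y ≤ -β * (‖X‖ ^ 2 * ‖Y‖ ^ 2 - ⟪X, Y⟫ ^ 2)) →
      ∀ φ : E →ₗ[ℝ] E →ₗ[ℝ] ℝ, (∀ X Y : E, φ X Y = φ Y X) →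
        (∑ i, φ (e i) (e i)) = 0 →
        (∑ i, ∑ j, ∑ k, ∑ l, R (e i) (e k) (e l) (e j) * φ (e k) (e l) * φ (e i) (e j)) ≤ 0) :=
  stmt_10_general hn e R hR1 hR2 β hβ
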